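/- Let Ω ⊆ V^ℕ be a one-sided subshift over a countable alphabet V with shift map T, and for x ∈ Ω and n ≥ 1 let r_n(x) := inf { k ≥ 1 : [x_0^{n-1}] ∩ T^{-k}[x_0^{n-1}] ≠ ∅ } be the topological return time of the n-cylinder of x (with inf ∅ = ∞). Then x is periodic (i.e. T^p x = x for some p ≥ 1) if and only if limsup_{n→∞} r_n(x) < ∞. -/
import Mathlib


namespace Paper

variable {V : Type*}

/-- The left shift on one-sided sequences. -/
def shift (x : ℕ → V) : ℕ → V := fun n => x (n + 1)

/-- The `n`-cylinder of `x` inside the subshift `Ω`. -/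
def cyl (Ω : Set (ℕ → V)) (x : ℕ → V) (n : ℕ) : Set (ℕ → V) :=
  {y | y ∈ Ω ∧ ∀ i < n, y i = x i}

/-- Topological return time of a set `A`, with values in `ℕ∞` (`⊤` if no return). -/
noncomputable def topRet (A : Set (ℕ → V)) : ENat :=
  sInf {k : ENat | ∃ m : ℕ, k = m ∧ 1 ≤ m ∧ (A ∩ (shift^[m]) ⁻¹' A).Nonempty}

lemma shift_iter (k : ℕ) (x : ℕ → V) (n : ℕ) : (shift^[k] x) n = x (n + k) := by
  induction k generalizing x with
  | zero => simp
  | succ k ih =>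
    rw [Function.iterate_succ_apply, ih (shift x)]
    show x (n + k + 1) = x (n + (k + 1))
    rw [Nat.add_assoc]

/-- A point of a subshift is periodic iff the topological return times of its
cylinders have finite limsup. -/
theorem periodic_iff_limsup_topRet_lt_top [Countable V] (Ω : Set (ℕ → V))
    (hΩ : ∀ x ∈ Ω, shift x ∈ Ω) (x : ℕ → V) (hx : x ∈ Ω) :
    (∃ p : ℕ, 1 ≤ p ∧ shift^[p] x = x) ↔
      Filter.limsup (fun n : ℕ => topRet (cyl Ω x n)) Filter.atTop < (⊤ : ENat) := by
  constructor
  · rintro ⟨p, hp1, hpx⟩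
    have hbound : ∀ n : ℕ, topRet (cyl Ω x n) ≤ (p : ENat) := by
      intro n
      apply sInf_le
      refine ⟨p, rfl, hp1, ⟨x, ⟨hx, fun i _ => rfl⟩, ?_⟩⟩
      simp only [Set.mem_preimage, hpx]
      exact ⟨hx, fun i _ => rfl⟩
    have hle : Filter.limsup (fun n : ℕ => topRet (cyl Ω x n)) Filter.atTop ≤ (p : ENat) :=
      Filter.limsup_le_of_le (by isBoundedDefault) (Filter.Eventually.of_forall hbound)
    exact lt_of_le_of_lt hle (by exact_mod_cast WithTop.coe_lt_top p)
  · intro h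
    rw [Filter.limsup_eq] at h
    obtain ⟨a, ha, halt⟩ := sInf_lt_iff.mp h
    lift a to ℕ using halt.ne with m
    simp only [Set.mem_setOf_eq, Filter.eventually_atTop] at ha
    obtain ⟨N, hN⟩ := ha
    -- shrinking cylinders: intersections for larger n give them for smaller n
    have hshrink : ∀ (k n n' : ℕ), n ≤ n' →
        ((cyl Ω x n') ∩ (shift^[k]) ⁻¹' (cyl Ω x n')).Nonempty →
        ((cyl Ω x n) ∩ (shift^[k]) ⁻¹' (cyl Ω x n)).Nonempty := by
      rintro k n n' hnn ⟨y, ⟨hyΩ, hy⟩, hsΩ, hsy⟩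
      exact ⟨y, ⟨hyΩ, fun i hi => hy i (hi.trans_le hnn)⟩,
        hsΩ, fun i hi => hsy i (hi.trans_le hnn)⟩
    -- for every n there is k ∈ [1, m] with a return
    have hker : ∀ n : ℕ, ∃ k : ℕ, 1 ≤ k ∧ k ≤ m ∧
        ((cyl Ω x n) ∩ (shift^[k]) ⁻¹' (cyl Ω x n)).Nonempty := by
      intro n
      have hb : topRet (cyl Ω x (max n N)) ≤ (m : ENat) := hN _ (le_max_right _ _)
      have h2 : topRet (cyl Ω x (max n N)) < (m : ENat) + 1 :=
        lt_of_le_of_lt hb (by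
          have : ((m : ENat)) < (m : ENat) + 1 := by
            exact_mod_cast (by push_cast; exact_mod_cast Nat.lt_succ_self m :
              (m : ENat) < ((m + 1 : ℕ) : ENat))
          exact_mod_cast this)
      obtain ⟨b, hb', hblt⟩ := sInf_lt_iff.mp h2
      obtain ⟨k, rfl, hk1, hne⟩ := hb'
      have hkm : k ≤ m := by
        have : (k : ENat) < ((m + 1 : ℕ) : ENat) := by push_cast; exact_mod_cast hblt
        exact Nat.lt_succ_iff.mp (by exact_mod_cast this)
      exact ⟨k, hk1, hkm, hshrink k n (max n N) (le_max_left _ _) hne⟩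
    -- pigeonhole: one k works for all n
    have key : ∃ k : ℕ, 1 ≤ k ∧ ∀ n : ℕ,
        ((cyl Ω x n) ∩ (shift^[k]) ⁻¹' (cyl Ω x n)).Nonempty := by
      by_contra hcon
      push_neg at hcon
      simp only [← Set.not_nonempty_iff_eq_empty] at hcon
      have hcon' : ∀ k : ℕ, ∃ n : ℕ, 1 ≤ k →
          ¬ ((cyl Ω x n) ∩ (shift^[k]) ⁻¹' (cyl Ω x n)).Nonempty := by
        intro k
        by_cases hk : 1 ≤ k
        · exact (hcon k hk).imp fun n hn _ => hn
        · exact ⟨0, fun h' => absurd h' hk⟩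
      choose f hf using hcon'
      set M := (Finset.Icc 1 m).sup f with hM
      obtain ⟨k, hk1, hkm, hne⟩ := hker M
      have hfk : f k ≤ M := Finset.le_sup (Finset.mem_Icc.mpr ⟨hk1, hkm⟩)
      exact hf k hk1 (hshrink k (f k) M hfk hne)
    obtain ⟨k, hk1, hQ⟩ := key
    refine ⟨k, hk1, funext fun i => ?_⟩
    obtain ⟨y, ⟨_, hy⟩, _, hsy⟩ := hQ (i + k + 1)
    have h1 : y (i + k) = x (i + k) := hy _ (by omega)
    have h2 : (shift^[k] y) i = x i := hsy i (by omega)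
    rw [shift_iter] at h2
    calc (shift^[k] x) i = x (i + k) := shift_iter k x i
      _ = y (i + k) := h1.symm
      _ = x i := h2

end Paper
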